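/- Let Q⁽¹⁾,…,Q⁽ᴷ⁾ be ℓ×ℓ real symmetric positive definite matrices and λ > 0. Then over all ℓ×ℓ real symmetric positive definite matrices M, the objective J(M) := λ·KL(I, M) + Σ_{k=1}^{K} KL(Q⁽ᵏ⁾, M) attains its unique global minimum at M = (1/(λ+K))·(Σ_{k=1}^{K} Q⁽ᵏ⁾ + λ·I). -/

import Mathlib

open Matrix Real

/-- The matrix Kullback–Leibler divergence
`KL(Q, M) := (1/2)[Tr(M⁻¹Q) + log det M − log det Q − ℓ]`. -/
noncomputable def matKL {l : ℕ} (Q M : Matrix (Fin l) (Fin l) ℝ) : ℝ :=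
  (1 / 2) * ((M⁻¹ * Q).trace + Real.log M.det - Real.log Q.det - l)

/-!
Since `Tr(M⁻¹Q)` is linear in `Q`, the objective is `(λ + K)·KL(M⋆, M)` plus a constant, where `M⋆`
is the weighted mean of `I, Q⁽¹⁾, …, Q⁽ᴷ⁾`. So it suffices that `KL(A, B) ≥ 0` with equality only
for `A = B`. Writing `C = T A T` with `T² = B⁻¹`, we have
`2·KL(A, B) = Tr C − log det C − ℓ = ∑ᵢ (μᵢ − log μᵢ − 1)` over the eigenvalues `μᵢ > 0` of `C`,
and `log x ≤ x − 1` with equality only at `x = 1` forces `C = 1`, i.e. `A = B`.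
-/

namespace Matrix.PosDef

variable {n : Type*} [Fintype n] [DecidableEq n] {C : Matrix n n ℝ}

theorem trace_sub_log_det_sub_card_eq_sum (hC : C.PosDef) :
    C.trace - log C.det - Fintype.card n
      = ∑ i, (hC.1.eigenvalues i - log (hC.1.eigenvalues i) - 1) := by
  rw [hC.1.trace_eq_sum_eigenvalues, hC.1.det_eq_prod_eigenvalues]
  simp only [RCLike.ofReal_real_eq_id, id, Finset.sum_sub_distrib, Finset.sum_const,
    Finset.card_univ, nsmul_eq_mul, mul_one]
  rw [log_prod fun i _ => (hC.eigenvalues_pos i).ne']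

theorem log_det_le_trace_sub_card (hC : C.PosDef) : log C.det ≤ C.trace - Fintype.card n := by
  have hsum := hC.trace_sub_log_det_sub_card_eq_sum
  have hnonneg : 0 ≤ ∑ i, (hC.1.eigenvalues i - log (hC.1.eigenvalues i) - 1) :=
    Finset.sum_nonneg fun i _ => by linarith [log_le_sub_one_of_pos (hC.eigenvalues_pos i)]
  linarith

theorem eq_one_of_log_det_eq_trace_sub_card (hC : C.PosDef)
    (h : log C.det = C.trace - Fintype.card n) : C = 1 := by
  have hsum : ∑ i, (hC.1.eigenvalues i - log (hC.1.eigenvalues i) - 1) = 0 := by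
    linarith [hC.trace_sub_log_det_sub_card_eq_sum]
  have heig : ∀ i, hC.1.eigenvalues i = 1 := fun i => by
    by_contra hne
    have hlt := log_lt_sub_one_of_pos (hC.eigenvalues_pos i) hne
    have := (Finset.sum_eq_zero_iff_of_nonneg fun j _ => by
      linarith [log_le_sub_one_of_pos (hC.eigenvalues_pos j)]).mp hsum i (Finset.mem_univ i)
    linarith
  refine CFC.eq_one_of_spectrum_subset_one (R := ℝ) C ?_ hC.1
  rw [hC.1.spectrum_real_eq_range_eigenvalues]
  rintro _ ⟨i, rfl⟩
  exact heig i

section RCLike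

open scoped ComplexOrder

variable {𝕜 : Type*} [RCLike 𝕜]

theorem mul_mul_same {A T : Matrix n n 𝕜} (hA : A.PosDef) (hT : T.PosDef) :
    (T * A * T).PosDef := by
  simpa only [hT.1.eq] using
    hA.conjTranspose_mul_mul_same (mulVec_injective_of_isUnit hT.isUnit)

open scoped MatrixOrder in
theorem exists_posDef_mul_self_eq {B : Matrix n n 𝕜} (hB : B.PosDef) :
    ∃ T : Matrix n n 𝕜, T.PosDef ∧ T * T = B :=
  ⟨CFC.sqrt B, hB.isStrictlyPositive.sqrt.posDef, CFC.sqrt_mul_sqrt_self B⟩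

end RCLike

end Matrix.PosDef

section matKL

variable {l : ℕ} {A B : Matrix (Fin l) (Fin l) ℝ}

theorem matKL_eq_of_mul_self_eq_inv {T : Matrix (Fin l) (Fin l) ℝ} (hA : A.PosDef)
    (hB : B.PosDef) (hT : T * T = B⁻¹) :
    matKL A B = (1 / 2) * ((T * A * T).trace - log (T * A * T).det - l) := by
  have hdet : (T * A * T).det = A.det * (B.det)⁻¹ := by
    rw [det_mul, det_mul, mul_right_comm, ← det_mul, hT, det_nonsing_inv,
      Ring.inverse_eq_inv', mul_comm]
  rw [matKL, ← hT, hdet, log_mul hA.det_pos.ne' (inv_ne_zero hB.det_pos.ne'), log_inv,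
    Matrix.mul_assoc, trace_mul_comm T]
  ring

theorem matKL_nonneg (hA : A.PosDef) (hB : B.PosDef) : 0 ≤ matKL A B := by
  obtain ⟨T, hT, hTT⟩ := hB.inv.exists_posDef_mul_self_eq
  have := (hA.mul_mul_same hT).log_det_le_trace_sub_card
  rw [Fintype.card_fin] at this
  rw [matKL_eq_of_mul_self_eq_inv hA hB hTT]
  linarith

theorem eq_of_matKL_eq_zero (hA : A.PosDef) (hB : B.PosDef) (h : matKL A B = 0) : A = B := by
  obtain ⟨T, hT, hTT⟩ := hB.inv.exists_posDef_mul_self_eq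
  have hC : T * A * T = 1 := by
    refine (hA.mul_mul_same hT).eq_one_of_log_det_eq_trace_sub_card ?_
    rw [matKL_eq_of_mul_self_eq_inv hA hB hTT] at h
    rw [Fintype.card_fin]
    linarith
  calc A = T⁻¹ * (T * A * T) * T⁻¹ := by
        rw [Matrix.mul_assoc, Matrix.mul_assoc, mul_nonsing_inv _ hT.det_pos.ne'.isUnit, mul_one,
          ← Matrix.mul_assoc, nonsing_inv_mul _ hT.det_pos.ne'.isUnit, one_mul]
    _ = B := by rw [hC, mul_one, ← Matrix.mul_inv_rev, hTT,
      nonsing_inv_nonsing_inv _ hB.det_pos.ne'.isUnit]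

theorem matKL_self (hA : A.PosDef) : matKL A A = 0 := by
  simp [matKL, nonsing_inv_mul _ hA.det_pos.ne'.isUnit]

end matKL

theorem sum_mul_matKL_eq {ι : Type*} {l : ℕ} (s : Finset ι) (w : ι → ℝ)
    (Q : ι → Matrix (Fin l) (Fin l) ℝ) {P : Matrix (Fin l) (Fin l) ℝ}
    (hP : (∑ i ∈ s, w i) • P = ∑ i ∈ s, w i • Q i) (N : Matrix (Fin l) (Fin l) ℝ) :
    ∑ i ∈ s, w i * matKL (Q i) N = (∑ i ∈ s, w i) * matKL P N
      + (1 / 2) * ((∑ i ∈ s, w i) * log P.det - ∑ i ∈ s, w i * log (Q i).det) := by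
  have htr : (∑ i ∈ s, w i) * (N⁻¹ * P).trace = ∑ i ∈ s, w i * (N⁻¹ * Q i).trace := by
    rw [← smul_eq_mul, ← trace_smul, ← Matrix.mul_smul, hP, Finset.mul_sum, trace_sum]
    simp only [Matrix.mul_smul, trace_smul, smul_eq_mul]
  have hexpand : ∑ i ∈ s, w i * matKL (Q i) N = ∑ i ∈ s, ((1 / 2) * (w i * (N⁻¹ * Q i).trace)
      + (1 / 2) * (log N.det - l) * w i - (1 / 2) * (w i * log (Q i).det)) :=
    Finset.sum_congr rfl fun i _ => by rw [matKL]; ring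
  rw [hexpand, Finset.sum_sub_distrib, Finset.sum_add_distrib, ← Finset.mul_sum, ← Finset.mul_sum,
    ← Finset.mul_sum, ← htr, matKL]
  ring

theorem stmt9 {l K : ℕ} (Q : Fin K → Matrix (Fin l) (Fin l) ℝ)
    (hQ : ∀ k, (Q k).PosDef) (lam : ℝ) (hlam : 0 < lam)
    (Mstar : Matrix (Fin l) (Fin l) ℝ)
    (hMstar : Mstar = (1 / (lam + K)) • (∑ k, Q k + lam • (1 : Matrix (Fin l) (Fin l) ℝ))) :
    ∀ M : Matrix (Fin l) (Fin l) ℝ, M.PosDef →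
      (lam * matKL (1 : Matrix (Fin l) (Fin l) ℝ) Mstar + ∑ k, matKL (Q k) Mstar
          ≤ lam * matKL (1 : Matrix (Fin l) (Fin l) ℝ) M + ∑ k, matKL (Q k) M)
      ∧ (lam * matKL (1 : Matrix (Fin l) (Fin l) ℝ) M + ∑ k, matKL (Q k) M
            = lam * matKL (1 : Matrix (Fin l) (Fin l) ℝ) Mstar + ∑ k, matKL (Q k) Mstar
          → M = Mstar) := by
  have hK : 0 < lam + K := by positivity
  have hMstar_pos : Mstar.PosDef := by
    rw [hMstar]
    exact (PosDef.posSemidef_add (posSemidef_sum _ fun k _ => (hQ k).posSemidef)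
      (PosDef.one.smul hlam)).smul (by positivity)
  have hJ (N : Matrix (Fin l) (Fin l) ℝ) :
      lam * matKL 1 N + ∑ k, matKL (Q k) N = (lam + K) * matKL Mstar N
        + (1 / 2) * ((lam + K) * log Mstar.det - ∑ k, log (Q k).det) := by
    -- `I` is the summand at `none`, with weight `λ`
    have := sum_mul_matKL_eq Finset.univ (fun o : Option (Fin K) => o.elim lam fun _ => 1)
      (fun o => o.elim 1 Q) (P := Mstar) ?_ N
    · simpa [Fintype.sum_option] using this
    · simp [Fintype.sum_option, hMstar, smul_smul, hK.ne', add_comm]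
  intro M hM
  rw [hJ M, hJ Mstar, matKL_self hMstar_pos]
  refine ⟨by linarith [mul_nonneg hK.le (matKL_nonneg hMstar_pos hM)], fun h => ?_⟩
  refine (eq_of_matKL_eq_zero hMstar_pos hM ?_).symm
  exact (mul_eq_zero.mp (by linarith)).resolve_left hK.ne'
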